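/- arXiv:1811.10137 — 11 statements merged into one kernel-verified Lean document; each statement's English description precedes it below -/
import Mathlib

section
/- For all indices i, j : Fin n, the folded generators satisfy ⁅H i, E j⁆ = (A i j) • E j (integer scalar action on L). -/
open scoped Classical

/-- The σ-orbit `⟨i⟩` of an index `i`, as a finite set. -/
noncomputable def sigmaOrbit {n : ℕ} (σ : Equiv.Perm (Fin n)) (i : Fin n) : Finset (Fin n) :=
  Finset.univ.filter fun k => σ.SameCycle i k

/-- `b i = 3 − ∑_{k ∈ ⟨i⟩} a k i`. -/
noncomputable def bFold {n : ℕ} (a : Fin n → Fin n → ℤ) (σ : Equiv.Perm (Fin n))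
    (i : Fin n) : ℤ :=
  3 - ∑ k ∈ sigmaOrbit σ i, a k i

/-- The folded Cartan matrix `A i j = b i · ∑_{k ∈ ⟨i⟩} a k j`. -/
noncomputable def AFold {n : ℕ} (a : Fin n → Fin n → ℤ) (σ : Equiv.Perm (Fin n))
    (i j : Fin n) : ℤ :=
  bFold a σ i * ∑ k ∈ sigmaOrbit σ i, a k j

/-- `E i = ∑_{k ∈ ⟨i⟩} e k`. -/
noncomputable def EFold {n : ℕ} {L : Type*} [LieRing L]
    (σ : Equiv.Perm (Fin n)) (e : Fin n → L) (i : Fin n) : L :=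
  ∑ k ∈ sigmaOrbit σ i, e k

/-- `F i = b i • ∑_{k ∈ ⟨i⟩} f k`. -/
noncomputable def FFold {n : ℕ} {L : Type*} [LieRing L]
    (a : Fin n → Fin n → ℤ) (σ : Equiv.Perm (Fin n)) (f : Fin n → L) (i : Fin n) : L :=
  bFold a σ i • ∑ k ∈ sigmaOrbit σ i, f k

/-- `H i = b i • ∑_{k ∈ ⟨i⟩} h k`. -/
noncomputable def HFold {n : ℕ} {L : Type*} [LieRing L]
    (a : Fin n → Fin n → ℤ) (σ : Equiv.Perm (Fin n)) (h : Fin n → L) (i : Fin n) : L :=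
  bFold a σ i • ∑ k ∈ sigmaOrbit σ i, h k

/-!
Since `a` is `σ`-invariant, the column sum `∑_{k ∈ ⟨i⟩} a k l` is unchanged when `l` is replaced
by `σ l`, hence is constant along the orbit `⟨j⟩`. So `∑_{k ∈ ⟨i⟩} h k` acts on every `e l` with
`l ∈ ⟨j⟩` by the same scalar `∑_{k ∈ ⟨i⟩} a k j`, and therefore on their sum `E j` as well.
-/

open Finset

theorem Equiv.Perm.SameCycle.apply_eq_of_comp_eq {α β : Type*} [Finite α] {σ : Equiv.Perm α}
    {g : α → β} (hg : g ∘ σ = g) {x y : α} (hxy : σ.SameCycle x y) : g y = g x := by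
  obtain ⟨k, rfl⟩ := hxy.exists_nat_pow_eq
  rw [← Equiv.Perm.iterate_eq_pow]
  exact congrFun (Function.iterate_invariant hg k) x

theorem lie_sum_eq_smul_sum_of_forall {R L ι : Type*} [CommRing R] [LieRing L] [LieAlgebra R L]
    {x : L} {s : Finset ι} {e : ι → L} {c : R} (h : ∀ l ∈ s, ⁅x, e l⁆ = c • e l) :
    ⁅x, ∑ l ∈ s, e l⁆ = c • ∑ l ∈ s, e l := by
  rw [lie_sum, smul_sum]
  exact sum_congr rfl h

theorem sum_lie_eq_sum_smul {L ι : Type*} [LieRing L] {h e : ι → L} {a : ι → ι → ℤ}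
    (hhe : ∀ k l, ⁅h k, e l⁆ = a k l • e l) (s : Finset ι) (l : ι) :
    ⁅∑ k ∈ s, h k, e l⁆ = (∑ k ∈ s, a k l) • e l := by
  rw [sum_lie, sum_smul]
  exact sum_congr rfl fun k _ => hhe k l

section SigmaOrbit

variable {n : ℕ} (σ : Equiv.Perm (Fin n))

theorem mem_sigmaOrbit {i k : Fin n} : k ∈ sigmaOrbit σ i ↔ σ.SameCycle i k := by
  simp [sigmaOrbit]

theorem sum_sigmaOrbit_comp_perm {M : Type*} [AddCommMonoid M] (g : Fin n → M) (i : Fin n) :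
    ∑ k ∈ sigmaOrbit σ i, g (σ k) = ∑ k ∈ sigmaOrbit σ i, g k :=
  sum_equiv σ (fun k => by simp only [mem_sigmaOrbit, Equiv.Perm.sameCycle_apply_right])
    fun _ _ => rfl

variable {σ} {M : Type*} [AddCommMonoid M] {a : Fin n → Fin n → M}

theorem sum_sigmaOrbit_apply_perm_right (hσ : ∀ i j, a (σ i) (σ j) = a i j) (i l : Fin n) :
    ∑ k ∈ sigmaOrbit σ i, a k (σ l) = ∑ k ∈ sigmaOrbit σ i, a k l := by
  rw [← sum_sigmaOrbit_comp_perm σ (fun k => a k (σ l))]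
  exact sum_congr rfl fun k _ => hσ k l

theorem sum_sigmaOrbit_eq_of_sameCycle (hσ : ∀ i j, a (σ i) (σ j) = a i j) (i : Fin n)
    {j l : Fin n} (hjl : σ.SameCycle j l) :
    ∑ k ∈ sigmaOrbit σ i, a k l = ∑ k ∈ sigmaOrbit σ i, a k j :=
  hjl.apply_eq_of_comp_eq (g := fun l => ∑ k ∈ sigmaOrbit σ i, a k l)
    (funext (sum_sigmaOrbit_apply_perm_right hσ i))

end SigmaOrbit

theorem folded_H_E_general {L : Type*} [LieRing L]
    {n : ℕ}
    (a : Fin n → Fin n → ℤ)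
    (e h : Fin n → L)
    (hhe : ∀ i j, ⁅h i, e j⁆ = a i j • e j)
    (σ : Equiv.Perm (Fin n))
    (hσ : ∀ i j, a (σ i) (σ j) = a i j)
    (i j : Fin n) :
    ⁅HFold a σ h i, EFold σ e j⁆ = AFold a σ i j • EFold σ e j := by
  have hscalar : ∀ l ∈ sigmaOrbit σ j,
      ⁅∑ k ∈ sigmaOrbit σ i, h k, e l⁆ = (∑ k ∈ sigmaOrbit σ i, a k j) • e l := fun l hl => by
    rw [sum_lie_eq_sum_smul hhe,
      sum_sigmaOrbit_eq_of_sameCycle hσ i ((mem_sigmaOrbit σ).1 hl)]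
  rw [HFold, EFold, AFold, smul_lie, lie_sum_eq_smul_sum_of_forall hscalar, mul_smul]

theorem folded_H_E {K L : Type*} [Field K] [CharZero K] [LieRing L] [LieAlgebra K L]
    {n : ℕ} (hn : 1 ≤ n)
    (a : Fin n → Fin n → ℤ)
    (hdiag : ∀ i, a i i = 2)
    (hoff : ∀ i j, i ≠ j → a i j ≤ 0)
    (e f h : Fin n → L)
    (hhh : ∀ i j, ⁅h i, h j⁆ = 0)
    (hef : ∀ i, ⁅e i, f i⁆ = h i)
    (hef' : ∀ i j, i ≠ j → ⁅e i, f j⁆ = 0)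
    (hhe : ∀ i j, ⁅h i, e j⁆ = a i j • e j)
    (hhf : ∀ i j, ⁅h i, f j⁆ = (-(a i j)) • f j)
    (σ : Equiv.Perm (Fin n))
    (hσ : ∀ i j, a (σ i) (σ j) = a i j)
    (i j : Fin n) :
    ⁅HFold a σ h i, EFold σ e j⁆ = AFold a σ i j • EFold σ e j :=
  folded_H_E_general a e h hhe σ hσ i j
end

section
/- If moreover p : ℕ satisfies X^{p+1} v = 0, then (X + Y)^{2p+1} v = 0. -/
/-!
Give `X` weight 1 and `Z = [X, Y]` weight 2. Since `Y v = 0` and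
`[X ^ (a + 1), Y] = (a + 1) X ^ a Z`, `Y` sends `X ^ (a + 1) Z ^ b v` to a multiple of
`X ^ a Z ^ (b + 1) v` and kills `Z ^ b v`, so `(X + Y) ^ n v` is a combination of the vectors
`X ^ a Z ^ b v` of weight `a + 2 b = n`.
Applying `Y` repeatedly to `X ^ (p + 1) v = 0` and dividing by the nonzero integers `a + 1`
shows `X ^ a Z ^ b v = 0` as soon as `a + b ≥ p + 1`, which holds whenever `a + 2 b = 2 p + 1`.
-/

section Commutator

variable {R : Type*} [Ring R] {X Y Z : R}

theorem pow_succ_mul_sub_mul_pow_succ (hZ : Z = X * Y - Y * X) (hXZ : Commute X Z) (n : ℕ) :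
    X ^ (n + 1) * Y - Y * X ^ (n + 1) = (n + 1) • (X ^ n * Z) := by
  induction n with
  | zero => simp [hZ]
  | succ n ih =>
    calc X ^ (n + 2) * Y - Y * X ^ (n + 2)
        = X * (X ^ (n + 1) * Y - Y * X ^ (n + 1)) + (X * Y - Y * X) * X ^ (n + 1) := by
          rw [pow_succ' X (n + 1)]; noncomm_ring
      _ = (n + 1) • (X ^ (n + 1) * Z) + X ^ (n + 1) * Z := by
          rw [ih, ← hZ, mul_smul_comm, ← mul_assoc, ← pow_succ', (hXZ.pow_left (n + 1)).eq]
      _ = (n + 2) • (X ^ (n + 1) * Z) := (succ_nsmul _ _).symm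

end Commutator

section Heisenberg

variable {R V : Type*} [Ring R] [AddCommGroup V] [Module R V] {X Y Z : Module.End R V} {v : V}

theorem apply_pow_apply_eq_zero (hYZ : Commute Y Z) (hYv : Y v = 0) (b : ℕ) :
    Y ((Z ^ b) v) = 0 := by
  rw [← Module.End.mul_apply, (hYZ.pow_right b).eq, Module.End.mul_apply, hYv, map_zero]

theorem apply_pow_succ_mul_pow_apply (hZ : Z = X * Y - Y * X) (hXZ : Commute X Z)
    (hYZ : Commute Y Z) (hYv : Y v = 0) (a b : ℕ) :
    Y ((X ^ (a + 1) * Z ^ b) v) = -((a + 1) • (X ^ a * Z ^ (b + 1)) v) := by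
  have hYX : Y * X ^ (a + 1) = X ^ (a + 1) * Y - (a + 1) • (X ^ a * Z) := by
    rw [← pow_succ_mul_sub_mul_pow_succ hZ hXZ a, sub_sub_cancel]
  rw [← Module.End.mul_apply, ← mul_assoc, hYX, sub_mul, smul_mul_assoc, mul_assoc, mul_assoc,
    ← pow_succ', LinearMap.sub_apply, Module.End.mul_apply, Module.End.mul_apply,
    apply_pow_apply_eq_zero hYZ hYv, map_zero, zero_sub, LinearMap.smul_apply]

def weightVectors (X Z : Module.End R V) (v : V) (n : ℕ) : Set V :=
  {w | ∃ a b, a + 2 * b = n ∧ (X ^ a * Z ^ b) v = w}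

theorem pow_mul_pow_apply_mem_weightVectors {a b n : ℕ} (h : a + 2 * b = n) :
    (X ^ a * Z ^ b) v ∈ weightVectors X Z v n :=
  ⟨a, b, h, rfl⟩

theorem apply_mem_span_weightVectors_succ (hZ : Z = X * Y - Y * X) (hXZ : Commute X Z)
    (hYZ : Commute Y Z) (hYv : Y v = 0) {n : ℕ} {w : V} (hw : w ∈ weightVectors X Z v n) :
    (X + Y) w ∈ Submodule.span R (weightVectors X Z v (n + 1)) := by
  obtain ⟨a, b, rfl, rfl⟩ := hw
  rw [LinearMap.add_apply, ← Module.End.mul_apply X, ← mul_assoc, ← pow_succ']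
  refine Submodule.add_mem _
    (Submodule.subset_span (pow_mul_pow_apply_mem_weightVectors (by omega))) ?_
  cases a with
  | zero => simp [apply_pow_apply_eq_zero hYZ hYv]
  | succ a =>
    rw [apply_pow_succ_mul_pow_apply hZ hXZ hYZ hYv]
    refine neg_mem (nsmul_mem (Submodule.subset_span ?_) _)
    exact pow_mul_pow_apply_mem_weightVectors (by omega)

theorem pow_add_apply_mem_span_weightVectors (hZ : Z = X * Y - Y * X) (hXZ : Commute X Z)
    (hYZ : Commute Y Z) (hYv : Y v = 0) (n : ℕ) :
    ((X + Y) ^ n) v ∈ Submodule.span R (weightVectors X Z v n) := by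
  induction n with
  | zero => exact Submodule.subset_span ⟨0, 0, rfl, by simp⟩
  | succ n ih =>
    have hstep : Submodule.span R (weightVectors X Z v n) ≤
        (Submodule.span R (weightVectors X Z v (n + 1))).comap (X + Y) :=
      Submodule.span_le.mpr fun _ hw ↦ apply_mem_span_weightVectors_succ hZ hXZ hYZ hYv hw
    rw [pow_succ', Module.End.mul_apply]
    exact hstep ih

theorem pow_mul_pow_apply_eq_zero [IsAddTorsionFree V] (hZ : Z = X * Y - Y * X)
    (hXZ : Commute X Z) (hYZ : Commute Y Z) (hYv : Y v = 0) {p : ℕ}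
    (hXv : (X ^ (p + 1)) v = 0) {j k : ℕ} (hjk : p + 1 ≤ j + k) : (X ^ j * Z ^ k) v = 0 := by
  induction k generalizing j with
  | zero => simp [← pow_sub_mul_pow X (show p + 1 ≤ j by omega), hXv]
  | succ k ih =>
    have h := congrArg Y (ih (j := j + 1) (by omega))
    rw [apply_pow_succ_mul_pow_apply hZ hXZ hYZ hYv, map_zero, neg_eq_zero] at h
    exact (smul_eq_zero.mp h).resolve_left j.succ_ne_zero

end Heisenberg

theorem conj_pq_case_q_zero {K V : Type*} [Field K] [CharZero K] [AddCommGroup V] [Module K V]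
    (X Y Z : Module.End K V)
    (hZ : Z = X * Y - Y * X)
    (hXZ : X * Z = Z * X)
    (hYZ : Y * Z = Z * Y)
    (v : V) (hYv : Y v = 0)
    (p : ℕ) (hXv : (X ^ (p + 1)) v = 0) :
    ((X + Y) ^ (2 * p + 1)) v = 0 := by
  have : IsAddTorsionFree V := .of_isTorsionFree K V
  have hspan := pow_add_apply_mem_span_weightVectors (R := K) hZ hXZ hYZ hYv (2 * p + 1)
  rwa [Submodule.span_eq_bot.mpr, Submodule.mem_bot] at hspan
  rintro _ ⟨a, b, hab, rfl⟩
  exact pow_mul_pow_apply_eq_zero hZ hXZ hYZ hYv hXv (by omega)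
end

section
/- Then (X + Y)^5 v = 0. -/
/-!
When `z = xy - yx` commutes with `x` and `y`, one has `[x², y²] = 2z(xy + yx)`, so
`x²v = y²v = 0` forces `z(xy + yx)v = 0`. Feeding this into
`3z²x = x·z(xy + yx) - 2zy·x²` gives `z²xv = 0`, and by the symmetry `(x, y, z) ↦ (y, x, -z)`
also `z²yv = 0`. Modulo the left ideal generated by `x²` and `y²`, `(x + y)³ ≡ 3z(x - y)`, and
`(x + y)(x - y)v = -zv`; hence `(x + y)⁵v = -3z²(x + y)v = 0`.
-/

section Ring

variable {A : Type*} [Ring A] {x y z : A}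

theorem three_nsmul_sq_mul_of_commute_commutator (hz : z = x * y - y * x) (hxz : Commute x z) :
    3 • (z ^ 2 * x) = x * (z * (x * y + y * x)) - 2 • (z * y * x ^ 2) := by
  -- `noncomm_ring` cannot use `Commute`, so the defect is computed in the free ring as a
  -- combination of the commutator `x * z - z * x`, which then vanishes.
  have key : 3 • (z ^ 2 * x) - (x * (z * (x * y + y * x)) - 2 • (z * y * x ^ 2)) =
      -(z * (x * z - z * x) + (x * z - z * x) * (x * y + y * x)) := by
    subst hz; noncomm_ring
  rwa [sub_eq_zero.2 hxz.eq, mul_zero, zero_mul, add_zero, neg_zero, sub_eq_zero] at key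

structure IsHeisenbergTriple (x y z : A) : Prop where
  eq_commutator : z = x * y - y * x
  commute_left : Commute x z
  commute_right : Commute y z

namespace IsHeisenbergTriple

theorem swap (h : IsHeisenbergTriple x y z) : IsHeisenbergTriple y x (-z) where
  eq_commutator := by rw [h.eq_commutator, neg_sub]
  commute_left := h.commute_right.neg_right
  commute_right := h.commute_left.neg_right

theorem sq_mul_sq_sub_sq_mul_sq (h : IsHeisenbergTriple x y z) :
    x ^ 2 * y ^ 2 - y ^ 2 * x ^ 2 = 2 • (z * (x * y + y * x)) := by
  obtain ⟨hz, hxz, hyz⟩ := h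
  have key : x ^ 2 * y ^ 2 - y ^ 2 * x ^ 2 - 2 • (z * (x * y + y * x)) =
      (x * z - z * x) * y + y * (x * z - z * x) + 2 • ((y * z - z * y) * x) := by
    subst hz; noncomm_ring
  rwa [sub_eq_zero.2 hxz.eq, sub_eq_zero.2 hyz.eq, zero_mul, mul_zero, zero_mul, smul_zero,
    add_zero, add_zero, sub_eq_zero] at key

theorem add_pow_three (h : IsHeisenbergTriple x y z) :
    (x + y) ^ 3 = (x + 3 • y) * x ^ 2 + (3 • x + y) * y ^ 2 + 3 • (z * (x - y)) := by
  obtain ⟨hz, hxz, hyz⟩ := h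
  have key : (x + y) ^ 3 - ((x + 3 • y) * x ^ 2 + (3 • x + y) * y ^ 2 + 3 • (z * (x - y))) =
      (x * z - z * x) - (y * z - z * y) := by
    subst hz; noncomm_ring
  rwa [sub_eq_zero.2 hxz.eq, sub_eq_zero.2 hyz.eq, sub_zero, sub_eq_zero] at key

end IsHeisenbergTriple

end Ring

section Module

variable {A M : Type*} [Ring A] [AddCommGroup M] [Module A M] [IsAddTorsionFree M]
  {x y z : A} {v : M}

namespace IsHeisenbergTriple

theorem mul_anticommutator_smul_eq_zero (h : IsHeisenbergTriple x y z) (hxv : x ^ 2 • v = 0)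
    (hyv : y ^ 2 • v = 0) : (z * (x * y + y * x)) • v = 0 := by
  have key := congrArg (· • v) h.sq_mul_sq_sub_sq_mul_sq
  simp only [sub_smul, mul_smul, hxv, hyv, smul_zero, sub_zero, smul_assoc] at key
  rw [mul_smul]
  exact (nsmul_eq_zero_iff_right two_ne_zero).1 key.symm

theorem sq_mul_smul_eq_zero (h : IsHeisenbergTriple x y z) (hxv : x ^ 2 • v = 0)
    (hyv : y ^ 2 • v = 0) : (z ^ 2 * x) • v = 0 := by
  have key := congrArg (· • v)
    (three_nsmul_sq_mul_of_commute_commutator h.eq_commutator h.commute_left)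
  simp only [smul_assoc, sub_smul, mul_smul, h.mul_anticommutator_smul_eq_zero hxv hyv, hxv,
    smul_zero, sub_zero] at key
  rw [mul_smul]
  exact (nsmul_eq_zero_iff_right three_ne_zero).1 key

theorem add_pow_five_smul_eq_zero (h : IsHeisenbergTriple x y z) (hxv : x ^ 2 • v = 0)
    (hyv : y ^ 2 • v = 0) : (x + y) ^ 5 • v = 0 := by
  have hzx : (z ^ 2 * x) • v = 0 := h.sq_mul_smul_eq_zero hxv hyv
  have hzy : (z ^ 2 * y) • v = 0 := by simpa using h.swap.sq_mul_smul_eq_zero hyv hxv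
  have hcube : (x + y) ^ 3 • v = (3 • (z * (x - y))) • v := by
    rw [h.add_pow_three, add_smul, add_smul, mul_smul, mul_smul, hxv, hyv, smul_zero, smul_zero,
      zero_add, zero_add]
  have hsq : ((x + y) * (x - y)) • v = -(z • v) := by
    rw [show (x + y) * (x - y) = x ^ 2 - y ^ 2 - z by rw [h.eq_commutator]; noncomm_ring,
      sub_smul, sub_smul, hxv, hyv, sub_zero, zero_sub]
  have hzxy : Commute z (x + y) := (h.commute_left.add_left h.commute_right).symm
  have hmove : (x + y) ^ 2 * (z * (x - y)) = z * (x + y) * ((x + y) * (x - y)) := by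
    rw [← mul_assoc, ← (hzxy.pow_right 2).eq]; noncomm_ring
  calc (x + y) ^ 5 • v = (x + y) ^ 2 • (x + y) ^ 3 • v := by rw [← mul_smul, ← pow_add]
    _ = 3 • (z * (x + y)) • ((x + y) * (x - y)) • v := by
        rw [hcube, smul_assoc, smul_comm, ← mul_smul, hmove, mul_smul]
    _ = -(3 • (z ^ 2 * (x + y)) • v) := by
        rw [hsq, smul_neg, smul_neg, ← mul_smul, mul_assoc, ← hzxy.eq, ← mul_assoc, ← sq]
    _ = 0 := by rw [mul_add, add_smul, hzx, hzy, add_zero, smul_zero, neg_zero]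

end IsHeisenbergTriple

end Module

theorem conj_pq_case_p_q_one {K V : Type*} [Field K] [CharZero K] [AddCommGroup V] [Module K V]
    (X Y Z : Module.End K V)
    (hZ : Z = X * Y - Y * X)
    (hXZ : X * Z = Z * X)
    (hYZ : Y * Z = Z * Y)
    (v : V) (hXv : X (X v) = 0) (hYv : Y (Y v) = 0) :
    ((X + Y) ^ 5) v = 0 := by
  have : IsAddTorsionFree V := .of_isTorsionFree K V
  have h : IsHeisenbergTriple X Y Z := ⟨hZ, hXZ, hYZ⟩
  have hsq (W : Module.End K V) (hW : W (W v) = 0) : W ^ 2 • v = 0 := by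
    rwa [Module.End.smul_def, sq, Module.End.mul_apply]
  exact h.add_pow_five_smul_eq_zero (hsq X hXv) (hsq Y hYv)
end

section
/- For every natural number n one has (X + Y)^n v = ∑_{k, l ≥ 0, 2k + l = n} (−1)^k · (n! / (k! · l! · 2^k)) • Z^k (X^l v), where each coefficient n!/(k!·l!·2^k) with 2k + l = n is a positive integer. (This is the coefficient form of the Baker–Campbell–Hausdorff identity e^{t(X+Y)} v = e^{−t²Z/2} e^{tX} v.) -/
/-!
On the vectors `Z ^ k (X ^ l v)`, the operator `X` raises `l`, while `Y` acts as `-Z ∂/∂X`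
because `Y v = 0` and `[X, Y] = Z` is central. Hence `X + Y` acts as `x - z ∂ₓ` on homogenized
polynomials `∑ pₗ z^((n-l)/2) xˡ`, and since `Heₙ₊₁ = x Heₙ - Heₙ'`, the vector `(X + Y) ^ n v`
is the homogenized (probabilists') Hermite polynomial `Heₙ` evaluated at `(X, Z)` on `v`. For
`n = 2k + l` its coefficients are `coeff Heₙ l = (-1)ᵏ (2k-1)‼ binom(n, l)`, and
`(2k-1)‼ binom(n, l) = n! / (k! l! 2ᵏ)`.
-/

open Finset Polynomial
open scoped Nat

theorem lie_pow_succ_left_of_commute {A : Type*} [Ring A] {x y : A} (h : Commute x ⁅x, y⁆)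
    (n : ℕ) : ⁅x ^ (n + 1), y⁆ = (n + 1) • (⁅x, y⁆ * x ^ n) := by
  induction n with
  | zero => simp
  | succ n ih =>
    calc ⁅x ^ (n + 1 + 1), y⁆ = x * ⁅x ^ (n + 1), y⁆ + ⁅x, y⁆ * x ^ (n + 1) := by
          simp only [Ring.lie_def, pow_succ' x (n + 1)]
          generalize x ^ (n + 1) = a
          noncomm_ring
      _ = (n + 1 + 1) • (⁅x, y⁆ * x ^ (n + 1)) := by
          rw [ih, mul_smul_comm, ← mul_assoc, h.eq, mul_assoc, ← pow_succ', ← succ_nsmul]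

theorem two_mul_factorial (k : ℕ) : (2 * k)! = 2 ^ k * k ! * (2 * k - 1)‼ := by
  cases k with
  | zero => rfl
  | succ k =>
    rw [show 2 * (k + 1) = 2 * k + 1 + 1 by ring, Nat.factorial_eq_mul_doubleFactorial,
      ← Nat.doubleFactorial_two_mul, show 2 * k + 1 + 1 - 1 = 2 * k + 1 by omega]
    ring_nf

theorem factorial_eq_mul_doubleFactorial_mul_choose (k l : ℕ) :
    (2 * k + l)! = k ! * l ! * 2 ^ k * ((2 * k - 1)‼ * (2 * k + l).choose l) := by
  rw [← Nat.add_choose_mul_factorial_mul_factorial, two_mul_factorial]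
  ring

theorem factorial_div_eq_doubleFactorial_mul_choose (k l : ℕ) :
    (2 * k + l)! / (k ! * l ! * 2 ^ k) = (2 * k - 1)‼ * (2 * k + l).choose l :=
  Nat.div_eq_of_eq_mul_right (by positivity) (factorial_eq_mul_doubleFactorial_mul_choose k l)

theorem coeff_hermite_eq_factorial_div {n k l : ℕ} (h : 2 * k + l = n) :
    (hermite n).coeff l = (-1) ^ k * ((n ! / (k ! * l ! * 2 ^ k) : ℕ) : ℤ) := by
  subst h
  rw [factorial_div_eq_doubleFactorial_mul_choose, coeff_hermite_explicit]
  push_cast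
  ring

section Heisenberg

variable {R V : Type*} [Semiring R] [AddCommGroup V] [Module R V]

theorem Module.End.apply_apply_of_commute {f g : Module.End R V} (h : Commute f g) (w : V) :
    f (g w) = g (f w) :=
  LinearMap.congr_fun h.eq w

def evalHomog (X Z : Module.End R V) (v : V) (n : ℕ) (p : ℤ[X]) : V :=
  ∑ l ∈ range (n + 1), p.coeff l • (Z ^ ((n - l) / 2)) ((X ^ l) v)

variable {X Y Z : Module.End R V} {v : V}

theorem evalHomog_sub (n : ℕ) (p q : ℤ[X]) :
    evalHomog X Z v n (p - q) = evalHomog X Z v n p - evalHomog X Z v n q := by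
  simp only [evalHomog, coeff_sub, sub_smul, sum_sub_distrib]

theorem evalHomog_X_mul (hXZ : Commute X Z) (n : ℕ) (p : ℤ[X]) :
    evalHomog X Z v (n + 1) (Polynomial.X * p) = X (evalHomog X Z v n p) := by
  rw [evalHomog, sum_range_succ', coeff_X_mul_zero, zero_smul, add_zero, evalHomog, map_sum]
  refine sum_congr rfl fun l _ => ?_
  rw [coeff_X_mul, map_zsmul, Nat.add_sub_add_right, pow_succ', Module.End.mul_apply,
    Module.End.apply_apply_of_commute (hXZ.pow_right _)]

theorem Y_apply_pow_apply_pow_succ (hZ : Z = X * Y - Y * X) (hXZ : Commute X Z)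
    (hYZ : Commute Y Z) (hYv : Y v = 0) (m j : ℕ) :
    Y ((Z ^ m) ((X ^ (j + 1)) v)) = -((j + 1 : ℤ) • (Z ^ (m + 1)) ((X ^ j) v)) := by
  have hXY : ⁅X, Y⁆ = Z := by rw [Ring.lie_def, hZ]
  have hYX : Y * X ^ (j + 1) = X ^ (j + 1) * Y - (j + 1) • (Z * X ^ j) := by
    rw [← hXY, ← lie_pow_succ_left_of_commute (hXY ▸ hXZ) j, Ring.lie_def]
    abel
  rw [Module.End.apply_apply_of_commute (hYZ.pow_right m), ← Module.End.mul_apply Y, hYX]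
  simp only [LinearMap.sub_apply, LinearMap.smul_apply, Module.End.mul_apply, hYv, map_zero,
    zero_sub, ← natCast_zsmul]
  push_cast
  rw [map_neg, map_zsmul, pow_succ, Module.End.mul_apply]

theorem evalHomog_derivative (hZ : Z = X * Y - Y * X) (hXZ : Commute X Z)
    (hYZ : Commute Y Z) (hYv : Y v = 0) {n : ℕ} {p : ℤ[X]} (hp : p.natDegree ≤ n) :
    evalHomog X Z v (n + 1) (derivative p) = -Y (evalHomog X Z v n p) := by
  have hvanish : ∀ j, n < j → p.coeff j = 0 := fun j hj =>
    coeff_eq_zero_of_natDegree_lt (by omega)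
  have hY0 : Y ((Z ^ (n / 2)) ((X ^ 0) v)) = 0 := by
    rw [pow_zero, Module.End.one_apply, Module.End.apply_apply_of_commute (hYZ.pow_right _), hYv,
      map_zero]
  rw [evalHomog, sum_range_succ, sum_range_succ, coeff_derivative, coeff_derivative,
    hvanish _ (by omega), hvanish _ (by omega), evalHomog, sum_range_succ', map_add, map_sum,
    map_zsmul, Nat.sub_zero, hY0]
  simp only [zero_mul, zero_smul, smul_zero, add_zero, ← sum_neg_distrib]
  refine sum_congr rfl fun j hj => ?_
  have hexp : (n - (j + 1)) / 2 + 1 = (n + 1 - j) / 2 := by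
    have := mem_range.mp hj
    omega
  rw [map_zsmul, Y_apply_pow_apply_pow_succ hZ hXZ hYZ hYv, coeff_derivative, hexp, smul_neg,
    neg_neg, smul_smul]

theorem add_pow_apply_eq_evalHomog_hermite (hZ : Z = X * Y - Y * X) (hXZ : Commute X Z)
    (hYZ : Commute Y Z) (hYv : Y v = 0) (n : ℕ) :
    ((X + Y) ^ n) v = evalHomog X Z v n (hermite n) := by
  induction n with
  | zero => simp [evalHomog]
  | succ n ih =>
    rw [hermite_succ, evalHomog_sub, evalHomog_X_mul hXZ,
      evalHomog_derivative hZ hXZ hYZ hYv natDegree_hermite.le, ← ih, pow_succ',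
      Module.End.mul_apply, LinearMap.add_apply, sub_neg_eq_add]

theorem evalHomog_hermite_eq_sum_filter (n : ℕ) :
    evalHomog X Z v n (hermite n) =
      ∑ kl ∈ (range (n + 1) ×ˢ range (n + 1)).filter (fun kl => 2 * kl.1 + kl.2 = n),
        (hermite n).coeff kl.2 • (Z ^ kl.1) ((X ^ kl.2) v) := by
  rw [evalHomog, ← sum_filter_of_ne (p := fun l => Even (n + l))]
  · refine sum_nbij' (fun l => ((n - l) / 2, l)) Prod.snd ?_ ?_ (fun _ _ => rfl) ?_
      (fun _ _ => rfl)
    all_goals intro x hx; simp only [mem_filter, mem_range, mem_product, Nat.even_iff] at hx ⊢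
    · omega
    · omega
    · exact Prod.ext (by omega) rfl
  · intro l _ hl
    by_contra hodd
    exact hl (by rw [coeff_hermite_of_odd_add (Nat.not_even_iff_odd.mp hodd), zero_smul])

end Heisenberg

theorem bch_coefficient_expansion_general {K V : Type*} [Field K]
    [AddCommGroup V] [Module K V]
    (X Y Z : Module.End K V)
    (hZ : Z = X * Y - Y * X)
    (hXZ : X * Z = Z * X)
    (hYZ : Y * Z = Z * Y)
    (v : V) (hYv : Y v = 0)
    (n : ℕ) :
    (((X + Y) ^ n) v =
      ∑ kl ∈ (Finset.range (n + 1) ×ˢ Finset.range (n + 1)).filter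
          (fun kl => 2 * kl.1 + kl.2 = n),
        ((-1 : ℤ) ^ kl.1 *
            ((n.factorial / (kl.1.factorial * kl.2.factorial * 2 ^ kl.1) : ℕ) : ℤ)) •
          ((Z ^ kl.1) ((X ^ kl.2) v))) ∧
    ∀ k l : ℕ, 2 * k + l = n →
      (k.factorial * l.factorial * 2 ^ k) ∣ n.factorial ∧
      0 < n.factorial / (k.factorial * l.factorial * 2 ^ k) := by
  refine ⟨?_, fun k l hkl => ?_⟩
  · rw [add_pow_apply_eq_evalHomog_hermite hZ hXZ hYZ hYv, evalHomog_hermite_eq_sum_filter]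
    refine sum_congr rfl fun kl hkl => ?_
    rw [coeff_hermite_eq_factorial_div (mem_filter.mp hkl).2]
  · subst hkl
    rw [factorial_div_eq_doubleFactorial_mul_choose]
    exact ⟨⟨_, factorial_eq_mul_doubleFactorial_mul_choose k l⟩,
      Nat.mul_pos (Nat.doubleFactorial_pos _) (Nat.choose_pos (by omega))⟩

theorem bch_coefficient_expansion {K V : Type*} [Field K] [CharZero K]
    [AddCommGroup V] [Module K V]
    (X Y Z : Module.End K V)
    (hZ : Z = X * Y - Y * X)
    (hXZ : X * Z = Z * X)
    (hYZ : Y * Z = Z * Y)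
    (v : V) (hYv : Y v = 0)
    (n : ℕ) :
    (((X + Y) ^ n) v =
      ∑ kl ∈ (Finset.range (n + 1) ×ˢ Finset.range (n + 1)).filter
          (fun kl => 2 * kl.1 + kl.2 = n),
        ((-1 : ℤ) ^ kl.1 *
            ((n.factorial / (kl.1.factorial * kl.2.factorial * 2 ^ kl.1) : ℕ) : ℤ)) •
          ((Z ^ kl.1) ((X ^ kl.2) v))) ∧
    ∀ k l : ℕ, 2 * k + l = n →
      (k.factorial * l.factorial * 2 ^ k) ∣ n.factorial ∧
      0 < n.factorial / (k.factorial * l.factorial * 2 ^ k) :=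
  bch_coefficient_expansion_general X Y Z hZ hXZ hYZ v hYv n
end

section
/- Then (X + Y)^3 v = 3 • (Z (X v) − Z (Y v)). -/
/-!
Expand `(X + Y)³ v` into the eight words in `X`, `Y`. Moving one letter past another costs a
commutator `Z`, and `Z` is central in the algebra generated by `X` and `Y`; together with
`X² v = Y² v = 0` this reduces every word to a multiple of `Z X v` or `Z Y v`. Since swapping
`X` and `Y` negates `Z`, the words ending in `X v` and those ending in `Y v` are handled by the
same two identities.
-/

section RingAction

variable {A M : Type*} [Ring A] [AddCommGroup M] [Module A M]

theorem smul_smul_eq_lie_smul_add (x y : A) (w : M) :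
    x • y • w = ⁅x, y⁆ • w + y • x • w := by
  rw [Ring.lie_def, sub_smul, mul_smul, mul_smul]
  abel

theorem smul_smul_smul_of_smul_smul_eq_zero {x : A} {v : M} (y : A) (hv : x • x • v = 0) :
    x • y • x • v = ⁅x, y⁆ • x • v := by
  rw [smul_smul_eq_lie_smul_add, hv, smul_zero, add_zero]

theorem smul_smul_smul_of_commute_lie {x y : A} {v : M} (hx : Commute x ⁅x, y⁆)
    (hv : x • x • v = 0) : x • x • y • v = (2 : ℤ) • ⁅x, y⁆ • x • v := by
  have hxz : x • ⁅x, y⁆ • v = ⁅x, y⁆ • x • v := by rw [← mul_smul, hx.eq, mul_smul]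
  rw [smul_smul_eq_lie_smul_add x y v, smul_add, hxz,
    smul_smul_smul_of_smul_smul_eq_zero y hv, two_smul]

theorem add_pow_three_smul (x y : A) (v : M) :
    (x + y) ^ 3 • v =
      x • x • x • v + x • x • y • v + x • y • x • v + x • y • y • v
        + y • x • x • v + y • x • y • v + y • y • x • v + y • y • y • v := by
  simp only [pow_succ, pow_zero, one_mul, mul_smul, add_smul, smul_add]
  abel

theorem add_pow_three_smul_of_commute_lie {x y : A} {v : M}
    (hx : Commute x ⁅x, y⁆) (hy : Commute y ⁅x, y⁆)
    (hxv : x • x • v = 0) (hyv : y • y • v = 0) :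
    (x + y) ^ 3 • v = (3 : ℤ) • (⁅x, y⁆ • x • v - ⁅x, y⁆ • y • v) := by
  have hskew : ⁅y, x⁆ = -⁅x, y⁆ := by rw [Ring.lie_def, Ring.lie_def, neg_sub]
  have hy' : Commute y ⁅y, x⁆ := hskew ▸ hy.neg_right
  rw [add_pow_three_smul, hxv, hyv, smul_zero, smul_zero,
    smul_smul_smul_of_commute_lie hx hxv, smul_smul_smul_of_smul_smul_eq_zero y hxv,
    smul_smul_smul_of_commute_lie hy' hyv, smul_smul_smul_of_smul_smul_eq_zero x hyv,
    hskew, neg_smul]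
  abel

end RingAction

theorem XY_cube_apply_general {K V : Type*} [Field K] [AddCommGroup V] [Module K V]
    (X Y Z : Module.End K V)
    (hZ : Z = X * Y - Y * X)
    (hXZ : X * Z = Z * X)
    (hYZ : Y * Z = Z * Y)
    (v : V) (hXv : X (X v) = 0) (hYv : Y (Y v) = 0) :
    ((X + Y) ^ 3) v = (3 : ℤ) • (Z (X v) - Z (Y v)) := by
  rw [hZ, ← Ring.lie_def] at hXZ hYZ ⊢
  exact add_pow_three_smul_of_commute_lie hXZ hYZ hXv hYv

theorem XY_cube_apply {K V : Type*} [Field K] [CharZero K] [AddCommGroup V] [Module K V]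
    (X Y Z : Module.End K V)
    (hZ : Z = X * Y - Y * X)
    (hXZ : X * Z = Z * X)
    (hYZ : Y * Z = Z * Y)
    (v : V) (hXv : X (X v) = 0) (hYv : Y (Y v) = 0) :
    ((X + Y) ^ 3) v = (3 : ℤ) • (Z (X v) - Z (Y v)) :=
  XY_cube_apply_general X Y Z hZ hXZ hYZ v hXv hYv
end

section
/- Then (X + Y)^4 v = −3 • Z (Z v). -/
/-!
With `D = XY + YX` and `Z = ⁅X, Y⁆` central for `X` and `Y`, one has `X²D = (D + 4Z)X²`,
`Y²D = (D - 4Z)Y²` and `D² = 2X²Y² + 2Y²X² - 3Z²`. Since `(X + Y)² = X² + Y² + D`, writing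
`(X + Y)⁴ = (X + Y)²(X² + Y²) + (X + Y)²D` shows that `(X + Y)⁴ + 3Z²` lies in the left ideal
generated by `X²` and `Y²`, which annihilates `v`.
-/

section Heisenberg

variable {A : Type*} [Ring A] {X Y : A}

theorem sq_mul_anticomm_of_commute_lie (hX : Commute X ⁅X, Y⁆) :
    X ^ 2 * (X * Y + Y * X) = (X * Y + Y * X + 4 * ⁅X, Y⁆) * X ^ 2 := by
  have key : X ^ 2 * (X * Y + Y * X) - (X * Y + Y * X + 4 * ⁅X, Y⁆) * X ^ 2 =
      X * (X * ⁅X, Y⁆ - ⁅X, Y⁆ * X) + 3 * (X * ⁅X, Y⁆ - ⁅X, Y⁆ * X) * X := by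
    rw [Ring.lie_def]; noncomm_ring
  simpa only [hX.eq, sub_self, mul_zero, zero_mul, add_zero, sub_eq_zero] using key

theorem anticomm_sq_of_commute_lie (hX : Commute X ⁅X, Y⁆) (hY : Commute Y ⁅X, Y⁆) :
    (X * Y + Y * X) ^ 2 = 2 * X ^ 2 * Y ^ 2 + 2 * Y ^ 2 * X ^ 2 - 3 * ⁅X, Y⁆ ^ 2 := by
  have key : (X * Y + Y * X) ^ 2 - (2 * X ^ 2 * Y ^ 2 + 2 * Y ^ 2 * X ^ 2 - 3 * ⁅X, Y⁆ ^ 2) =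
      2 * X * (Y * ⁅X, Y⁆ - ⁅X, Y⁆ * Y) - 2 * Y * (X * ⁅X, Y⁆ - ⁅X, Y⁆ * X) := by
    rw [Ring.lie_def]; noncomm_ring
  simpa only [hX.eq, hY.eq, sub_self, mul_zero, sub_zero, sub_eq_zero] using key

theorem exists_add_pow_four_eq_of_commute_lie (hX : Commute X ⁅X, Y⁆) (hY : Commute Y ⁅X, Y⁆) :
    ∃ P Q : A, (X + Y) ^ 4 = P * X ^ 2 + Q * Y ^ 2 + (-3 : ℤ) • ⁅X, Y⁆ ^ 2 := by
  have hYX : Y ^ 2 * (X * Y + Y * X) = (X * Y + Y * X - 4 * ⁅X, Y⁆) * Y ^ 2 := by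
    have hskew : ⁅Y, X⁆ = -⁅X, Y⁆ := by simp only [Ring.lie_def, neg_sub]
    have := sq_mul_anticomm_of_commute_lie (X := Y) (Y := X) (hskew ▸ hY.neg_right)
    rwa [add_comm (Y * X), hskew, mul_neg, ← sub_eq_add_neg] at this
  set D := X * Y + Y * X
  refine ⟨(X + Y) ^ 2 + D + 4 * ⁅X, Y⁆ + 2 * Y ^ 2, (X + Y) ^ 2 + D - 4 * ⁅X, Y⁆ + 2 * X ^ 2, ?_⟩
  calc (X + Y) ^ 4 = (X + Y) ^ 2 * (X ^ 2 + Y ^ 2) + (X ^ 2 * D + Y ^ 2 * D + D ^ 2) := by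
        simp only [D]; noncomm_ring
    _ = _ := by
        rw [sq_mul_anticomm_of_commute_lie hX, hYX, anticomm_sq_of_commute_lie hX hY]
        simp only [D]; noncomm_ring

end Heisenberg

theorem XY_fourth_apply_general {K V : Type*} [Field K] [AddCommGroup V] [Module K V]
    (X Y Z : Module.End K V)
    (hZ : Z = X * Y - Y * X)
    (hXZ : X * Z = Z * X)
    (hYZ : Y * Z = Z * Y)
    (v : V) (hXv : X (X v) = 0) (hYv : Y (Y v) = 0) :
    ((X + Y) ^ 4) v = (-3 : ℤ) • Z (Z v) := by
  rw [← Ring.lie_def] at hZ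
  subst hZ
  obtain ⟨P, Q, h⟩ := exists_add_pow_four_eq_of_commute_lie hXZ hYZ
  rw [h]
  simp only [LinearMap.add_apply, LinearMap.smul_apply, Module.End.mul_apply, sq, hXv, hYv,
    map_zero, zero_add]

theorem XY_fourth_apply {K V : Type*} [Field K] [CharZero K] [AddCommGroup V] [Module K V]
    (X Y Z : Module.End K V)
    (hZ : Z = X * Y - Y * X)
    (hXZ : X * Z = Z * X)
    (hYZ : Y * Z = Z * Y)
    (v : V) (hXv : X (X v) = 0) (hYv : Y (Y v) = 0) :
    ((X + Y) ^ 4) v = (-3 : ℤ) • Z (Z v) :=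
  XY_fourth_apply_general X Y Z hZ hXZ hYZ v hXv hYv
end

section
/- Then Z (Z (X v)) = 0 and Z (Z (Y v)) = 0. -/
/-!
Write `w = X v`, so `X w = 0`, and expand `X² Y² w` in two ways using `[X, Y²] = 2 Y Z` and
`[X², Y] = 2 X Z`, which hold because `Z` is central. Moving `X` to the right through `Y²` kills
it on `w` and leaves `2 Z² w`; rewriting `Y² X v = -2 Z Y v` first and then moving `X²` through
`Y` leaves `-4 Z² w`. Hence `6 Z² w = 0`. Exchanging `X` and `Y` replaces `Z` by `-Z`.
-/

section CentralCommutator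

variable {R M : Type*} [Ring R] [AddCommGroup M] [Module R M] {x y z : R}

theorem smul_smul_eq_smul_smul_add (hz : z = x * y - y * x) (w : M) :
    x • y • w = y • x • w + z • w := by
  rw [hz, sub_smul, mul_smul, mul_smul, add_sub_cancel]

theorem smul_smul_smul_eq_smul_smul_smul_add (hz : z = x * y - y * x) (hyz : Commute y z)
    (w : M) : x • y • y • w = y • y • x • w + 2 • z • y • w := by
  rw [smul_smul_eq_smul_smul_add hz, smul_smul_eq_smul_smul_add hz, smul_add, add_assoc,
    ← mul_smul y z, hyz.eq, mul_smul, two_nsmul]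

theorem six_nsmul_smul_smul_smul_eq_zero (hz : z = x * y - y * x) (hxz : Commute x z)
    (hyz : Commute y z) {v : M} (hx : x • x • v = 0) (hy : y • y • v = 0) :
    6 • z • z • x • v = 0 := by
  have hxy := smul_smul_eq_smul_smul_add (M := M) hz
  have hxyy := smul_smul_smul_eq_smul_smul_smul_add (M := M) hz hyz
  have hxxy : ∀ w : M, x • x • y • w = y • x • x • w + 2 • z • x • w := by
    intro w
    have := smul_smul_smul_eq_smul_smul_smul_add (M := M) (x := y) (y := x) (z := -z)
      (by rw [hz, neg_sub]) hxz.neg_right w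
    rw [this, neg_smul, smul_neg]; abel
  have hxz' : ∀ w : M, x • z • w = z • x • w := fun w => by rw [← mul_smul, hxz.eq, mul_smul]
  have h₁ : x • x • y • y • x • v = 2 • z • z • x • v := by
    rw [hxyy, hx, smul_zero, smul_zero, zero_add, smul_comm x (2 : ℕ), hxz', hxy, hx, smul_zero,
      zero_add]
  have h₂ : x • x • y • y • x • v = -(4 • z • z • x • v) := by
    have hyyx : y • y • x • v = -(2 • z • y • v) := by
      rw [eq_neg_iff_add_eq_zero, ← hxyy, hy, smul_zero]
    simp only [hyyx, smul_neg, smul_comm _ (2 : ℕ), hxz', hxxy, hx, smul_zero, zero_add]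
    abel
  rwa [h₁, eq_neg_iff_add_eq_zero, ← add_nsmul] at h₂

end CentralCommutator

theorem Z_sq_X_v_eq_zero {K V : Type*} [Field K] [CharZero K] [AddCommGroup V] [Module K V]
    (X Y Z : Module.End K V)
    (hZ : Z = X * Y - Y * X)
    (hXZ : X * Z = Z * X)
    (hYZ : Y * Z = Z * Y)
    (v : V) (hXv : X (X v) = 0) (hYv : Y (Y v) = 0) :
    Z (Z (X v)) = 0 ∧ Z (Z (Y v)) = 0 := by
  have six_ne_zero : (6 : K) ≠ 0 := by norm_num
  have hX := six_nsmul_smul_smul_smul_eq_zero hZ hXZ hYZ hXv hYv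
  have hY := six_nsmul_smul_smul_smul_eq_zero (x := Y) (z := -Z) (by rw [hZ, neg_sub])
    (Commute.neg_right hYZ) (Commute.neg_right hXZ) hYv hXv
  rw [← Nat.cast_smul_eq_nsmul K] at hX hY
  simp only [neg_smul, smul_neg, neg_neg] at hY
  exact ⟨(smul_eq_zero.mp hX).resolve_left six_ne_zero,
    (smul_eq_zero.mp hY).resolve_left six_ne_zero⟩
end

section
/- Let K be a field of characteristic zero, L a Lie algebra over K, and e, e′, v ∈ L with (ad e)² (e′) = 0 and (ad e′)² (e) = 0, where ad x = ⁅x, ·⁆. Let p, q be natural numbers with (ad e)^{p+1} (v) = 0 and (ad e′)^{q+1} (v) = 0, and assume p = 0, or q = 0, or (p = 1 and q = 1). Then (ad (e + e′))^{2p + 2q + 1} (v) = 0. -/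
/-!
Put `A = ad e`, `B = ad e'` and `C = ⁅A, B⁆`. The hypotheses on `e` and `e'` say that `C` commutes
with `A` and `B`, so `A • B ^ (m + 1) • x = B ^ (m + 1) • A • x + (m + 1) • C • B ^ m • x`.

For `p = 0` (and symmetrically `q = 0`): if `A • v = 0` and `B ^ (q + 1) • v = 0`, then
`C ^ k • B ^ m • v = 0` whenever `k + m ≥ q + 1`, and `(A + B) • C ^ k • B ^ m • v` is a combination
of `C ^ (k + 1) • B ^ (m - 1) • v` and `C ^ k • B ^ (m + 1) • v`; since `2k + m` grows by at least one at
each step, `(A + B) ^ n • C ^ k • B ^ m • v = 0` as soon as `n + 2k + m ≥ 2q + 1`.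

For `p = q = 1` one computes `(A + B) ^ 3 • v = 3 • C • (A • v - B • v)` and
`(A + B) • (A • v - B • v) = -C • v`, hence `(A + B) ^ 5 • v = -3 • C ^ 2 • (A • v + B • v)`.
Applying `A ^ 2` to `B ^ 2 • A • v = -2 • C • B • v` gives `6 • C ^ 2 • A • v = 0`, and likewise
`C ^ 2 • B • v = 0`.
-/

section Heisenberg

attribute [local instance 100] LieRing.ofAssociativeRing

variable {R M : Type*} [Ring R] [AddCommGroup M] [Module R M]

structure IsHeisenbergPair (A B : R) : Prop where
  commute_left : Commute A ⁅A, B⁆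
  commute_right : Commute B ⁅A, B⁆

theorem Commute.smul_smul_comm {a b : R} (h : Commute a b) (x : M) : a • b • x = b • a • x := by
  rw [← mul_smul, h.eq, mul_smul]

theorem smul_smul_eq_smul_smul_add_lie (A B : R) (x : M) :
    A • B • x = B • A • x + ⁅A, B⁆ • x := by
  rw [Ring.lie_def, sub_smul, mul_smul, mul_smul]
  abel

variable {A B : R} {v : M}

theorem mul_pow_succ_eq_of_commute_lie (h : Commute B ⁅A, B⁆) (n : ℕ) :
    A * B ^ (n + 1) = B ^ (n + 1) * A + (n + 1) • (⁅A, B⁆ * B ^ n) := by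
  induction n with
  | zero => simp [Ring.lie_def]
  | succ n ih =>
    have hAB : A * B = B * A + ⁅A, B⁆ := by rw [Ring.lie_def]; abel
    calc A * B ^ (n + 2) = (A * B ^ (n + 1)) * B := by rw [pow_succ _ (n + 1), mul_assoc]
      _ = B ^ (n + 1) * (A * B) + (n + 1) • (⁅A, B⁆ * B ^ (n + 1)) := by
        rw [ih, add_mul, smul_mul_assoc, mul_assoc, mul_assoc, ← pow_succ]
      _ = B ^ (n + 2) * A + (n + 2) • (⁅A, B⁆ * B ^ (n + 1)) := by
        rw [hAB, mul_add, ← mul_assoc, ← pow_succ, (h.pow_left (n + 1)).eq]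
        module

theorem smul_pow_succ_smul (h : Commute B ⁅A, B⁆) (n : ℕ) (x : M) :
    A • B ^ (n + 1) • x = B ^ (n + 1) • A • x + (n + 1) • ⁅A, B⁆ • B ^ n • x := by
  rw [← mul_smul, mul_pow_succ_eq_of_commute_lie h, add_smul, mul_smul, smul_assoc, mul_smul]

theorem smul_pow_succ_smul_of_smul_eq_zero (h : Commute B ⁅A, B⁆) (hv : A • v = 0) (n : ℕ) :
    A • B ^ (n + 1) • v = (n + 1) • ⁅A, B⁆ • B ^ n • v := by
  rw [smul_pow_succ_smul h, hv, smul_zero, zero_add]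

theorem smul_smul_smul_eq_neg_two_smul (h : Commute B ⁅A, B⁆) (hv : B • B • v = 0) :
    B • B • A • v = -(2 • ⁅A, B⁆ • B • v) := by
  have hA := smul_pow_succ_smul h 1 v
  simp only [pow_succ, pow_zero, one_mul, mul_smul, hv, smul_zero] at hA
  rw [eq_neg_iff_add_eq_zero, ← hA]

namespace IsHeisenbergPair

theorem symm (h : IsHeisenbergPair A B) : IsHeisenbergPair B A := by
  have hBA : ⁅B, A⁆ = -⁅A, B⁆ := (lie_skew B A).symm
  exact ⟨hBA ▸ h.commute_right.neg_right, hBA ▸ h.commute_left.neg_right⟩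

variable [IsAddTorsionFree M]

theorem lie_pow_smul_pow_smul_eq_zero (h : IsHeisenbergPair A B) {q : ℕ} (hv : A • v = 0)
    (hq : B ^ (q + 1) • v = 0) {k m : ℕ} (hkm : q + 1 ≤ k + m) :
    ⁅A, B⁆ ^ k • B ^ m • v = 0 := by
  induction k generalizing m with
  | zero =>
    obtain ⟨d, rfl⟩ := Nat.exists_eq_add_of_le' (Nat.zero_add m ▸ hkm)
    rw [pow_zero, one_smul, pow_add, mul_smul, hq, smul_zero]
  | succ k ih =>
    -- apply `A` to `⁅A, B⁆ ^ k • B ^ (m + 1) • v = 0`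
    rw [← nsmul_eq_zero_iff_right (n := m + 1) (by omega), pow_succ, mul_smul, ← smul_comm,
      ← smul_pow_succ_smul_of_smul_eq_zero h.commute_right hv,
      ← mul_smul, ← (h.commute_left.pow_right k).eq, mul_smul, ih (by omega), smul_zero]

theorem add_pow_smul_lie_pow_smul_pow_smul_eq_zero (h : IsHeisenbergPair A B) {q : ℕ}
    (hv : A • v = 0) (hq : B ^ (q + 1) • v = 0) {n k m : ℕ}
    (hnkm : 2 * q + 1 ≤ n + 2 * k + m) :
    (A + B) ^ n • ⁅A, B⁆ ^ k • B ^ m • v = 0 := by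
  induction n generalizing k m with
  | zero => rw [pow_zero, one_smul, h.lie_pow_smul_pow_smul_eq_zero hv hq (by omega)]
  | succ n ih =>
    have hA : A • ⁅A, B⁆ ^ k • B ^ m • v = ⁅A, B⁆ ^ k • A • B ^ m • v :=
      (h.commute_left.pow_right k).smul_smul_comm _
    have hB : B • ⁅A, B⁆ ^ k • B ^ m • v = ⁅A, B⁆ ^ k • B ^ (m + 1) • v := by
      rw [(h.commute_right.pow_right k).smul_smul_comm, pow_succ', mul_smul]
    rw [pow_succ, mul_smul, add_smul, hA, hB, smul_add]
    cases m with
    | zero => rw [pow_zero, one_smul, hv, smul_zero, smul_zero, zero_add, ih (by omega)]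
    | succ m =>
      rw [smul_pow_succ_smul_of_smul_eq_zero h.commute_right hv, smul_comm (⁅A, B⁆ ^ k),
        smul_smul, ← pow_succ, smul_comm _ (m + 1), ih (by omega), ih (by omega), smul_zero,
        add_zero]

theorem add_pow_two_mul_add_one_smul_eq_zero (h : IsHeisenbergPair A B) {q : ℕ}
    (hv : A • v = 0) (hq : B ^ (q + 1) • v = 0) : (A + B) ^ (2 * q + 1) • v = 0 := by
  simpa using h.add_pow_smul_lie_pow_smul_pow_smul_eq_zero hv hq (k := 0) (m := 0) le_rfl

theorem lie_smul_lie_smul_smul_eq_zero (h : IsHeisenbergPair A B)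
    (hA : A • A • v = 0) (hB : B • B • v = 0) : ⁅A, B⁆ • ⁅A, B⁆ • A • v = 0 := by
  have key := congrArg (A • A • ·)
    (eq_neg_iff_add_eq_zero.mp (smul_smul_smul_eq_neg_two_smul h.commute_right hB))
  simp only [smul_add, smul_smul_eq_smul_smul_add_lie A B, h.commute_left.smul_smul_comm, hA,
    smul_zero, zero_add, smul_comm A (2 : ℕ)] at key
  rw [← nsmul_eq_zero_iff_right (n := 6) (by norm_num), ← key]
  abel

theorem add_pow_five_smul_eq_zero (h : IsHeisenbergPair A B)
    (hA : A ^ 2 • v = 0) (hB : B ^ 2 • v = 0) : (A + B) ^ 5 • v = 0 := by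
  rw [sq, mul_smul] at hA hB
  have hCCA := h.lie_smul_lie_smul_smul_eq_zero hA hB
  have hCCB : ⁅A, B⁆ • ⁅A, B⁆ • B • v = 0 := by
    simpa only [← lie_skew B A, neg_smul, smul_neg, neg_neg] using
      h.symm.lie_smul_lie_smul_smul_eq_zero hB hA
  have hX3 : (A + B) ^ 3 • v = 3 • ⁅A, B⁆ • (A • v - B • v) := by
    simp only [pow_succ, pow_zero, one_mul, mul_smul, add_smul, smul_add, smul_sub,
      smul_smul_eq_smul_smul_add_lie A B, h.commute_left.smul_smul_comm,
      h.commute_right.smul_smul_comm, hA, hB, smul_smul_smul_eq_neg_two_smul h.commute_right hB,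
      smul_zero, zero_add, add_zero]
    abel
  have hX : (A + B) • (A • v - B • v) = -(⁅A, B⁆ • v) := by
    simp only [add_smul, smul_sub, smul_smul_eq_smul_smul_add_lie A B, hA, hB]
    abel
  have hXC : Commute (A + B) ⁅A, B⁆ := h.commute_left.add_left h.commute_right
  calc (A + B) ^ 5 • v = (A + B) • (A + B) • (A + B) ^ 3 • v := by
        rw [show 5 = 1 + 1 + 3 by rfl, pow_add, pow_succ, pow_one, mul_smul, mul_smul]
    _ = 3 • ⁅A, B⁆ • (A + B) • (A + B) • (A • v - B • v) := by
        rw [hX3, smul_comm _ 3, smul_comm _ 3, hXC.smul_smul_comm, hXC.smul_smul_comm]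
    _ = 0 := by
        simp only [hX, smul_neg, hXC.smul_smul_comm, add_smul, smul_add, hCCA, hCCB, add_zero,
          neg_zero, smul_zero]

end IsHeisenbergPair

open LieAlgebra

variable {K L : Type*} [CommRing K] [LieRing L] [LieAlgebra K L] {x y : L}

theorem commute_ad_lie_ad_of_ad_sq_eq_zero (h : (ad K L x ^ 2) y = 0) :
    Commute (ad K L x) ⁅ad K L x, ad K L y⁆ := by
  rw [commute_iff_lie_eq, ← LieHom.map_lie, ← LieHom.map_lie, ← ad_apply K, ← ad_apply K,
    ← Module.End.mul_apply, ← sq, h, map_zero]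

theorem isHeisenbergPair_ad (hx : (ad K L x ^ 2) y = 0) (hy : (ad K L y ^ 2) x = 0) :
    IsHeisenbergPair (ad K L x) (ad K L y) := by
  refine ⟨commute_ad_lie_ad_of_ad_sq_eq_zero hx, ?_⟩
  simpa only [← lie_skew (ad K L y), Commute.neg_right_iff] using
    commute_ad_lie_ad_of_ad_sq_eq_zero hy

end Heisenberg

theorem serre_conjecture_small_pq {K L : Type*} [Field K] [CharZero K]
    [LieRing L] [LieAlgebra K L]
    (e e' v : L)
    (he : ((LieAlgebra.ad K L e) ^ 2) e' = 0)
    (he' : ((LieAlgebra.ad K L e') ^ 2) e = 0)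
    (p q : ℕ)
    (hp : ((LieAlgebra.ad K L e) ^ (p + 1)) v = 0)
    (hq : ((LieAlgebra.ad K L e') ^ (q + 1)) v = 0)
    (hpq : p = 0 ∨ q = 0 ∨ (p = 1 ∧ q = 1)) :
    ((LieAlgebra.ad K L (e + e')) ^ (2 * p + 2 * q + 1)) v = 0 := by
  have : IsAddTorsionFree L := .of_isTorsionFree K L
  have h := isHeisenbergPair_ad he he'
  rw [map_add, ← Module.End.smul_def]
  rw [← Module.End.smul_def] at hp hq
  rcases hpq with rfl | rfl | ⟨rfl, rfl⟩
  · simpa using h.add_pow_two_mul_add_one_smul_eq_zero (by simpa using hp) hq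
  · simpa [add_comm] using h.symm.add_pow_two_mul_add_one_smul_eq_zero (by simpa using hq) hp
  · exact h.add_pow_five_smul_eq_zero hp hq
end

section
/- Let K be a field of characteristic zero, L a Lie algebra over K, D : L → L a K-linear derivation (D⁅x,y⁆ = ⁅D x, y⁆ + ⁅x, D y⁆ for all x, y), and u ∈ L such that (ad u)^N = 0 for some natural number N, where ad x = ⁅x, ·⁆. Define exp(ad u)(x) = ∑_{k=0}^{N−1} (1/k!) • (ad u)^k (x) and ∇u = ∑_{m=0}^{N−1} (1/(m+1)!) • (ad u)^m (D u). Then for every x ∈ L: D (exp(ad u)(x)) = ⁅∇u, exp(ad u)(x)⁆ + exp(ad u)(D x). -/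
/-!
With `A = ad u` and `a = D u`, the derivation property reads `⁅A, D⁆ = -ad a` in the Lie algebra
`End L`, and since `ad` is a morphism of Lie algebras, `(ad A)^(i+1) D = -ad (A^i a)`. The Leibniz
rule for the Lie module `L` over `End L`, applied to `A^(n+1) (D z)`, therefore gives
`D (A^(n+1) z) = A^(n+1) (D z) + ∑_{i+j=n} C(n+1, i+1) ⁅A^i a, A^j z⁆`. Dividing by `(n+1)!` turns
the binomial coefficients into `1/(i+1)! · 1/j!`, so summing over `n` yields the Cauchy product of
the two truncated series, which is their bracket because `A^N = 0`.
-/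

open Finset LieAlgebra

theorem Nat.inv_factorial_mul_add_choose {K : Type*} [Field K] [CharZero K] (i j : ℕ) :
    ((i + j).factorial : K)⁻¹ * (i + j).choose i = (i.factorial : K)⁻¹ * (j.factorial : K)⁻¹ := by
  rw [Nat.cast_add_choose]
  field_simp [Nat.factorial_ne_zero]

theorem Finset.sum_range_sum_antidiagonal_eq_sum_range_sum_range {M : Type*} [AddCommMonoid M]
    {N : ℕ} (g : ℕ → ℕ → M) (hg : ∀ i j, g i j ≠ 0 → i < N ∧ j < N) :
    ∑ n ∈ range (2 * N), ∑ ij ∈ antidiagonal n, g ij.1 ij.2 =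
      ∑ i ∈ range N, ∑ j ∈ range N, g i j := by
  rw [sum_sigma', ← sum_product']
  refine sum_bij_ne_zero (fun x _ _ => x.2) ?_ ?_ ?_ fun _ _ _ => rfl
  · rintro ⟨n, i, j⟩ - h
    simpa using hg i j h
  · rintro ⟨n, i, j⟩ h - ⟨n', i', j'⟩ h' - ⟨⟩
    simp only [mem_sigma, HasAntidiagonal.mem_antidiagonal] at h h'
    rw [← h.2, ← h'.2]
  · rintro ⟨i, j⟩ - h
    obtain ⟨hi, hj⟩ := hg i j h
    exact ⟨⟨i + j, i, j⟩, mem_sigma.2 ⟨mem_range.2 (show i + j < 2 * N by omega),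
      HasAntidiagonal.mem_antidiagonal.2 rfl⟩, h, rfl⟩

lemma Module.End.sum_range_smul_pow_apply_of_pow_eq_zero {R M : Type*} [Semiring R]
    [AddCommMonoid M] [Module R M] {f : Module.End R M} {N : ℕ} (hf : f ^ N = 0) {n : ℕ}
    (hn : N ≤ n) (c : ℕ → R) (y : M) :
    ∑ k ∈ range n, c k • (f ^ k) y = ∑ k ∈ range N, c k • (f ^ k) y := by
  refine (sum_subset (range_subset_range.mpr hn) fun k _ hk => ?_).symm
  rw [pow_eq_zero_of_le (by simpa using hk) hf, LinearMap.zero_apply, smul_zero]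

namespace LieAlgebra

section CommRing

variable {R L : Type*} [CommRing R] [LieRing L] [LieAlgebra R L]

attribute [local instance] LieRing.ofAssociativeRing

lemma ad_pow_ad_apply (u b : L) (n : ℕ) :
    (ad R (Module.End R L) (ad R L u) ^ n) (ad R L b) = ad R L ((ad R L u ^ n) b) := by
  induction n with
  | zero => simp
  | succ n ih =>
    rw [pow_succ', Module.End.mul_apply, ih, pow_succ', Module.End.mul_apply, ad_apply,
      ← LieHom.map_lie]
    rfl

lemma ad_pow_succ_ad_apply_of_derivation {D : Module.End R L}
    (hD : ∀ x y : L, D ⁅x, y⁆ = ⁅D x, y⁆ + ⁅x, D y⁆) (u : L) (n : ℕ) :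
    (ad R (Module.End R L) (ad R L u) ^ (n + 1)) D = -ad R L ((ad R L u ^ n) (D u)) := by
  have hcomm : ⁅ad R L u, D⁆ = -ad R L (D u) := by
    ext y
    simp [Ring.lie_def, hD]
  rw [pow_succ, Module.End.mul_apply, ad_apply, hcomm, map_neg, ad_pow_ad_apply]

lemma apply_ad_pow_succ_of_derivation {D : Module.End R L}
    (hD : ∀ x y : L, D ⁅x, y⁆ = ⁅D x, y⁆ + ⁅x, D y⁆) (u z : L) (n : ℕ) :
    D ((ad R L u ^ (n + 1)) z) = (ad R L u ^ (n + 1)) (D z) +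
      ∑ ij ∈ antidiagonal n, (n + 1).choose (ij.1 + 1) •
        ⁅(ad R L u ^ ij.1) (D u), (ad R L u ^ ij.2) z⁆ := by
  have h := LieModule.toEnd_pow_lie R (M := L) (ad R L u) D z (n + 1)
  have hT : LieModule.toEnd R (Module.End R L) L (ad R L u) = ad R L u := rfl
  simp only [Nat.sum_antidiagonal_succ, hT, ad_pow_succ_ad_apply_of_derivation hD,
    Module.End.lie_apply, pow_zero, Module.End.one_apply, Nat.choose_zero_right, one_smul,
    LinearMap.neg_apply, ad_apply, smul_neg, sum_neg_distrib] at h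
  rw [h]
  abel

end CommRing

section Field

variable {K L : Type*} [Field K] [CharZero K] [LieRing L] [LieAlgebra K L]

lemma apply_inv_factorial_smul_ad_pow_succ_of_derivation {D : Module.End K L}
    (hD : ∀ x y : L, D ⁅x, y⁆ = ⁅D x, y⁆ + ⁅x, D y⁆) (u z : L) (n : ℕ) :
    D (((n + 1).factorial : K)⁻¹ • (ad K L u ^ (n + 1)) z) =
      ((n + 1).factorial : K)⁻¹ • (ad K L u ^ (n + 1)) (D z) +
      ∑ ij ∈ antidiagonal n, ⁅((ij.1 + 1).factorial : K)⁻¹ • (ad K L u ^ ij.1) (D u),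
        (ij.2.factorial : K)⁻¹ • (ad K L u ^ ij.2) z⁆ := by
  rw [map_smul, apply_ad_pow_succ_of_derivation hD, smul_add, smul_sum]
  congr 1
  refine sum_congr rfl fun ⟨i, j⟩ hij => ?_
  rw [HasAntidiagonal.mem_antidiagonal] at hij
  subst hij
  rw [smul_lie, lie_smul, smul_smul, ← Nat.cast_smul_eq_nsmul K, smul_smul, add_right_comm,
    Nat.inv_factorial_mul_add_choose, mul_comm]

lemma apply_sum_range_succ_inv_factorial_smul_ad_pow_of_derivation {D : Module.End K L}
    (hD : ∀ x y : L, D ⁅x, y⁆ = ⁅D x, y⁆ + ⁅x, D y⁆) (u z : L) (n : ℕ) :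
    D (∑ k ∈ range (n + 1), (k.factorial : K)⁻¹ • (ad K L u ^ k) z) =
      ∑ k ∈ range (n + 1), (k.factorial : K)⁻¹ • (ad K L u ^ k) (D z) +
      ∑ m ∈ range n, ∑ ij ∈ antidiagonal m,
        ⁅((ij.1 + 1).factorial : K)⁻¹ • (ad K L u ^ ij.1) (D u),
          (ij.2.factorial : K)⁻¹ • (ad K L u ^ ij.2) z⁆ := by
  simp only [sum_range_succ' _ n, map_add, map_sum,
    apply_inv_factorial_smul_ad_pow_succ_of_derivation hD, sum_add_distrib, Nat.factorial_zero,
    Nat.cast_one, inv_one, pow_zero, one_smul, Module.End.one_apply]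
  abel

end Field

end LieAlgebra

/-- The dressing identity `D (e^{ad u} x) = ⁅∇u, e^{ad u} x⁆ + e^{ad u} (D x)` for a
derivation `D` and an element `u` with nilpotent adjoint action. -/
theorem derivation_exp_ad {K L : Type*} [Field K] [CharZero K] [LieRing L] [LieAlgebra K L]
    (D : L →ₗ[K] L)
    (hD : ∀ x y : L, D ⁅x, y⁆ = ⁅D x, y⁆ + ⁅x, D y⁆)
    (u : L) (N : ℕ) (hN : (LieAlgebra.ad K L u) ^ N = 0)
    (x : L) :
    D (∑ k ∈ Finset.range N, ((k.factorial : K)⁻¹) • (((LieAlgebra.ad K L u) ^ k) x)) =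
      ⁅∑ m ∈ Finset.range N,
          (((m + 1).factorial : K)⁻¹) • (((LieAlgebra.ad K L u) ^ m) (D u)),
        ∑ k ∈ Finset.range N, ((k.factorial : K)⁻¹) • (((LieAlgebra.ad K L u) ^ k) x)⁆ +
      ∑ k ∈ Finset.range N, ((k.factorial : K)⁻¹) • (((LieAlgebra.ad K L u) ^ k) (D x)) := by
  have hextend (c : ℕ → K) (y : L) : ∑ k ∈ range (2 * N + 1), c k • (ad K L u ^ k) y =
      ∑ k ∈ range N, c k • (ad K L u ^ k) y :=
    (ad K L u).sum_range_smul_pow_apply_of_pow_eq_zero hN (by omega) c y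
  rw [sum_lie_sum, ← sum_range_sum_antidiagonal_eq_sum_range_sum_range, ← hextend, ← hextend,
    apply_sum_range_succ_inv_factorial_smul_ad_pow_of_derivation hD, add_comm]
  intro i j hij
  constructor <;> by_contra! hle <;> simp [pow_eq_zero_of_le hle hN] at hij
end

section
/- Let K be a field of characteristic zero, R an associative unital K-algebra, and a, b ∈ R with a^N = 0 for some natural number N. Writing (ad a)(x) = a·x − x·a and exp(a) = ∑_{k=0}^{N−1} (1/k!) • a^k, one has ∑_{k=0}^{2N−2} (1/(k+1)!) • (∑_{l=0}^{k} a^l · b · a^{k−l}) = (∑_{m=0}^{2N−2} (1/(m+1)!) • (ad a)^m (b)) · exp(a). -/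
/-!
Let `x` and `y` be left and right multiplication by `a`: commuting operators with
`x ^ N = y ^ N = 0`, in terms of which the left side is the divided difference
`(exp x - exp y) / (x - y) = ∑ₖ (1/(k+1)!) ∑_{l ≤ k} x^l y^(k-l)` and the right side is
`φ(x - y) · exp y` with `φ(z) = (exp z - 1) / z`. Dividing by `x - y` is not possible, so we
expand instead: with `z = x - y`, the binomial theorem gives
`∑_{l ≤ k} x^l y^(k-l) = ∑_{i ≤ k} C(k+1, i+1) z^i y^(k-i)`, and
`C(k+1, i+1) / (k+1)! = 1 / ((i+1)! (k-i)!)`, so the divided difference is exactly the Cauchy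
product of `φ(z)` and `exp y`. Truncating everything at `2N - 1` loses nothing because
`z^i y^j = 0` as soon as `i + j ≥ 2N - 1`.
-/

open Finset Nat

section CommRing

variable {A : Type*} [CommRing A]

theorem geom_sum₂_eq_sum_choose_mul_sub_pow (x y : A) (k : ℕ) :
    ∑ l ∈ range (k + 1), x ^ l * y ^ (k - l) =
      ∑ i ∈ range (k + 1), ((k + 1).choose (i + 1) : A) * (x - y) ^ i * y ^ (k - i) := by
  induction k with
  | zero => simp
  | succ k ih =>
    have mul_y : ∀ f : ℕ → A, ∑ l ∈ range (k + 1), f l * y ^ (k + 1 - l) =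
        y * ∑ l ∈ range (k + 1), f l * y ^ (k - l) := fun f => by
      rw [mul_sum]
      refine sum_congr rfl fun l hl => ?_
      rw [show k + 1 - l = k - l + 1 by simp at hl; omega, pow_succ]
      ring
    have binomial : x ^ (k + 1) =
        ∑ i ∈ range (k + 2), ((k + 1).choose i : A) * (x - y) ^ i * y ^ (k + 1 - i) := by
      conv_lhs => rw [← sub_add_cancel x y, add_pow]
      exact sum_congr rfl fun i _ => by ring
    simp_rw [choose_succ_succ' (k + 1), Nat.cast_add, add_mul, sum_add_distrib, ← binomial]
    rw [sum_range_succ, sum_range_succ _ (k + 1), Nat.sub_self, choose_succ_self, mul_y, mul_y, ih]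
    simp [add_comm]

theorem sub_pow_mul_pow_eq_zero {x y : A} {m n i j : ℕ} (hx : x ^ m = 0) (hy : y ^ n = 0)
    (h : m + n ≤ i + j + 1) : (x - y) ^ i * y ^ j = 0 := by
  rw [sub_eq_add_neg, add_pow, sum_mul]
  refine sum_eq_zero fun r hr => ?_
  rcases le_or_gt m r with hmr | hrm
  · simp [pow_eq_zero_of_le hmr hx]
  · have hn : n ≤ i - r + j := by rw [mem_range] at hr; omega
    calc x ^ r * (-y) ^ (i - r) * i.choose r * y ^ j
        = x ^ r * (-1) ^ (i - r) * i.choose r * y ^ (i - r + j) := by ring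
      _ = 0 := by rw [pow_eq_zero_of_le hn hy, mul_zero]

end CommRing

theorem sum_range_mul_sum_range_of_mul_eq_zero {A : Type*} [NonUnitalNonAssocSemiring A]
    {n : ℕ} (u v : ℕ → A) (h : ∀ i j, n ≤ i + j → u i * v j = 0) :
    (∑ i ∈ range n, u i) * ∑ j ∈ range n, v j =
      ∑ k ∈ range n, ∑ i ∈ range (k + 1), u i * v (k - i) := by
  rw [sum_range_diag_flip n fun i j => u i * v j, sum_mul_sum]
  refine sum_congr rfl fun i hi => (sum_subset (range_mono (by omega)) fun j _ hj => ?_).symm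
  exact h i j (by simp at hj; omega)

theorem inv_factorial_mul_choose_succ {K : Type*} [Field K] [CharZero K] {i k : ℕ} (h : i ≤ k) :
    ((k + 1)! : K)⁻¹ * (k + 1).choose (i + 1) = ((i + 1)! : K)⁻¹ * ((k - i)! : K)⁻¹ := by
  rw [cast_choose K (by omega : i + 1 ≤ k + 1), show k + 1 - (i + 1) = k - i by omega]
  have : ((k + 1)! : K) ≠ 0 := cast_ne_zero.2 (factorial_ne_zero _)
  field_simp

section Algebra

variable {K A : Type*} [Field K] [CharZero K]

theorem sum_inv_factorial_smul_geom_sum₂_eq_mul [CommRing A] [Algebra K A] {x y : A} {N : ℕ}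
    (hx : x ^ N = 0) (hy : y ^ N = 0) :
    ∑ k ∈ range (2 * N - 1), ((k + 1)! : K)⁻¹ • ∑ l ∈ range (k + 1), x ^ l * y ^ (k - l) =
      (∑ m ∈ range (2 * N - 1), ((m + 1)! : K)⁻¹ • (x - y) ^ m) *
        ∑ k ∈ range N, (k ! : K)⁻¹ • y ^ k := by
  obtain rfl | hN := N.eq_zero_or_pos
  · simp
  have exp_range : ∑ k ∈ range N, (k ! : K)⁻¹ • y ^ k =
      ∑ k ∈ range (2 * N - 1), (k ! : K)⁻¹ • y ^ k :=
    sum_subset (range_mono (by omega)) fun j _ hj => by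
      rw [pow_eq_zero_of_le (by simpa using hj) hy, smul_zero]
  rw [exp_range, sum_range_mul_sum_range_of_mul_eq_zero]
  · refine sum_congr rfl fun k _ => ?_
    rw [geom_sum₂_eq_sum_choose_mul_sub_pow, smul_sum]
    refine sum_congr rfl fun i hi => ?_
    rw [smul_mul_smul_comm, mul_assoc, ← nsmul_eq_mul, ← Nat.cast_smul_eq_nsmul K, smul_smul,
      inv_factorial_mul_choose_succ (by simpa [Nat.lt_succ_iff] using hi)]
  · intro i j h
    rw [smul_mul_smul_comm, sub_pow_mul_pow_eq_zero hx hy (by omega), smul_zero]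

open scoped IsMulCommutative in
theorem Commute.sum_inv_factorial_smul_geom_sum₂_eq_mul [Ring A] [Algebra K A] {x y : A}
    (hxy : Commute x y) {N : ℕ} (hx : x ^ N = 0) (hy : y ^ N = 0) :
    ∑ k ∈ range (2 * N - 1), ((k + 1)! : K)⁻¹ • ∑ l ∈ range (k + 1), x ^ l * y ^ (k - l) =
      (∑ k ∈ range N, (k ! : K)⁻¹ • y ^ k) *
        ∑ m ∈ range (2 * N - 1), ((m + 1)! : K)⁻¹ • (x - y) ^ m := by
  let S := Algebra.adjoin K {x, y}
  have : IsMulCommutative S := Algebra.isMulCommutative_adjoin K <| by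
    simp only [Set.mem_insert_iff, Set.mem_singleton_iff]
    rintro a (rfl | rfl) b (rfl | rfl) <;> first | rfl | exact hxy | exact hxy.symm
  have hxS : x ∈ S := Algebra.subset_adjoin (by simp)
  have hyS : y ∈ S := Algebra.subset_adjoin (by simp)
  have h := _root_.sum_inv_factorial_smul_geom_sum₂_eq_mul (K := K)
    (x := (⟨x, hxS⟩ : S)) (y := ⟨y, hyS⟩) (Subtype.ext hx) (Subtype.ext hy)
  rw [mul_comm _ (∑ k ∈ range N, _)] at h
  simpa using congrArg Subtype.val h

end Algebra

theorem nabla_exp_identity {K R : Type*} [Field K] [CharZero K] [Ring R] [Algebra K R]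
    (a b : R) (N : ℕ) (hN : a ^ N = 0) :
    ∑ k ∈ Finset.range (2 * N - 1),
        (((k + 1).factorial : K)⁻¹) • (∑ l ∈ Finset.range (k + 1), a ^ l * b * a ^ (k - l)) =
      (∑ m ∈ Finset.range (2 * N - 1),
          (((m + 1).factorial : K)⁻¹) • ((fun x => a * x - x * a)^[m] b)) *
        (∑ k ∈ Finset.range N, ((k.factorial : K)⁻¹) • a ^ k) := by
  have ad_eq : ⇑(LinearMap.mulLeft K a - LinearMap.mulRight K a) = fun x => a * x - x * a := rfl
  have h := LinearMap.congr_fun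
    ((LinearMap.commute_mulLeft_right (R := K) a a).sum_inv_factorial_smul_geom_sum₂_eq_mul
      (K := K) (by rw [LinearMap.pow_mulLeft, hN, LinearMap.mulLeft_zero_eq_zero])
      (by rw [LinearMap.pow_mulRight, hN, LinearMap.mulRight_zero_eq_zero])) b
  simp only [Module.End.mul_apply, LinearMap.sum_apply, LinearMap.smul_apply,
    Module.End.pow_apply, ad_eq, LinearMap.pow_mulLeft, LinearMap.pow_mulRight,
    LinearMap.mulLeft_apply, LinearMap.mulRight_apply] at h
  rw [Finset.mul_sum]
  simpa only [mul_assoc, mul_smul_comm] using h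
end

section
/- Let L be a Lie algebra over a commutative ring, k ≥ 1, and y₁, …, y_k ∈ L such that ⁅y_p, y_q⁆ = 0 whenever |p − q| ≥ 2. Write Lb(y₁, …, y_k) = ⁅…⁅⁅y₁, y₂⁆, y₃⁆, …, y_k⁆ for the left-nested bracket. Then Lb(y₁, …, y_k) = ⁅y₁, ⁅y₂, ⁅…, ⁅y_{k−1}, y_k⁆ …⁆⁆⁆ (the right-nested bracket), and Lb(y₁, …, y_k) = (−1)^{k−1} • Lb(y_k, y_{k−1}, …, y₁). -/
/-- Left-nested iterated Lie bracket: `leftNest x [y₂, …, y_k] = ⁅…⁅⁅x, y₂⁆, y₃⁆, …, y_k⁆`. -/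
def leftNest {L : Type*} [LieRing L] : L → List L → L
  | x, [] => x
  | x, y :: ys => leftNest ⁅x, y⁆ ys

/-- Right-nested iterated Lie bracket:
`rightNest x [y₂, …, y_k] = ⁅x, ⁅y₂, ⁅…, ⁅y_{k−1}, y_k⁆ …⁆⁆⁆`. -/
def rightNest {L : Type*} [LieRing L] : L → List L → L
  | x, [] => x
  | x, y :: ys => ⁅x, rightNest y ys⁆

/-- Left-nested bracket of a list (junk value `0` on the empty list). -/
def leftNestList {L : Type*} [LieRing L] : List L → L
  | [] => 0
  | x :: ys => leftNest x ys

/-- Right-nested bracket of a list (junk value `0` on the empty list). -/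
def rightNestList {L : Type*} [LieRing L] : List L → L
  | [] => 0
  | x :: ys => rightNest x ys

/-!
If `y₁` commutes with `y₃, …, y_k`, the Jacobi identity lets `ad y₁` be pulled out of the
left-nested bracket, `Lb(⁅y₁, y₂⁆, y₃, …, y_k) = ⁅y₁, Lb(y₂, …, y_k)⁆`; induction on `k` then
turns left-nesting into right-nesting. Reversing a right-nested bracket gives a left-nested one
with one skew-symmetry sign per bracket.
-/

section NestedBrackets

variable {L : Type*} [LieRing L]

theorem leftNest_eq_foldl (x : L) (ys : List L) :
    leftNest x ys = ys.foldl (fun a b => ⁅a, b⁆) x := by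
  induction ys generalizing x with
  | nil => rfl
  | cons y ys ih => exact ih ⁅x, y⁆

theorem leftNest_append_singleton (x z : L) (ys : List L) :
    leftNest x (ys ++ [z]) = ⁅leftNest x ys, z⁆ := by
  simp only [leftNest_eq_foldl, List.foldl_append, List.foldl_cons, List.foldl_nil]

theorem leftNest_lie_of_forall_lie_eq_zero {x y : L} {ys : List L} (h : ∀ z ∈ ys, ⁅x, z⁆ = 0) :
    leftNest ⁅x, y⁆ ys = ⁅x, leftNest y ys⁆ := by
  induction ys generalizing y with
  | nil => rfl
  | cons z zs ih =>
    have hxz : ⁅⁅x, y⁆, z⁆ = ⁅x, ⁅y, z⁆⁆ := by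
      rw [lie_lie, h z List.mem_cons_self, lie_zero, sub_zero]
    rw [leftNest, leftNest, hxz]
    exact ih fun w hw => h w (List.mem_cons_of_mem z hw)

theorem rightNest_eq_neg_one_pow_smul_leftNestList_reverse (x : L) (ys : List L) :
    rightNest x ys = ((-1 : ℤ) ^ ys.length) • leftNestList (x :: ys).reverse := by
  induction ys generalizing x with
  | nil => simp [rightNest, leftNestList, leftNest]
  | cons y ys ih =>
    obtain ⟨w, ws, hw⟩ := List.exists_cons_of_ne_nil (List.reverse_ne_nil_iff.mpr
      (List.cons_ne_nil y ys))
    have hrev : (x :: y :: ys).reverse = w :: (ws ++ [x]) := by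
      rw [List.reverse_cons, hw, List.cons_append]
    calc rightNest x (y :: ys)
        = ⁅x, ((-1 : ℤ) ^ ys.length) • leftNest w ws⁆ := by rw [rightNest, ih, hw, leftNestList]
      _ = ((-1 : ℤ) ^ (y :: ys).length) • ⁅leftNest w ws, x⁆ := by
        rw [lie_smul, ← lie_skew, List.length_cons, pow_succ, mul_smul, neg_one_smul, smul_neg]
      _ = ((-1 : ℤ) ^ (y :: ys).length) • leftNestList (x :: y :: ys).reverse := by
        rw [hrev, leftNestList, leftNest_append_singleton]

theorem rightNestList_eq_neg_one_pow_smul_leftNestList_reverse (l : List L) :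
    rightNestList l = ((-1 : ℤ) ^ (l.length - 1)) • leftNestList l.reverse := by
  cases l with
  | nil => simp [rightNestList, leftNestList]
  | cons x ys => exact rightNest_eq_neg_one_pow_smul_leftNestList_reverse x ys

theorem leftNestList_eq_rightNestList : ∀ l : List L,
    (∀ p q : Fin l.length, (p : ℕ) + 2 ≤ (q : ℕ) → ⁅l.get p, l.get q⁆ = 0) →
    leftNestList l = rightNestList l
  | [], _ => rfl
  | [_], _ => rfl
  | x :: y :: zs, h => by
    have hx : ∀ z ∈ zs, ⁅x, z⁆ = 0 := by
      intro z hz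
      obtain ⟨i, rfl⟩ := List.mem_iff_get.mp hz
      exact h ⟨0, by simp⟩ ⟨i + 2, by simp⟩ (by simp)
    have htail : leftNest y zs = rightNest y zs :=
      leftNestList_eq_rightNestList (y :: zs) fun p q hpq =>
        h p.succ q.succ (by simp only [Fin.val_succ]; omega)
    calc leftNest ⁅x, y⁆ zs
        = ⁅x, leftNest y zs⁆ := leftNest_lie_of_forall_lie_eq_zero hx
      _ = ⁅x, rightNest y zs⁆ := congrArg _ htail

end NestedBrackets

theorem nested_bracket_symmetry_general {L : Type*} [LieRing L]
    (l : List L)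
    (hcomm : ∀ p q : Fin l.length, ((p : ℕ) + 2 ≤ (q : ℕ) ∨ (q : ℕ) + 2 ≤ (p : ℕ)) →
      ⁅l.get p, l.get q⁆ = 0) :
    leftNestList l = rightNestList l ∧
    leftNestList l = ((-1 : ℤ) ^ (l.length - 1)) • leftNestList l.reverse := by
  have hleft_right := leftNestList_eq_rightNestList l fun p q hpq => hcomm p q (Or.inl hpq)
  exact ⟨hleft_right,
    hleft_right.trans (rightNestList_eq_neg_one_pow_smul_leftNestList_reverse l)⟩

theorem nested_bracket_symmetry {R L : Type*} [CommRing R] [LieRing L] [LieAlgebra R L]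
    (l : List L) (hl : 1 ≤ l.length)
    (hcomm : ∀ p q : Fin l.length, ((p : ℕ) + 2 ≤ (q : ℕ) ∨ (q : ℕ) + 2 ≤ (p : ℕ)) →
      ⁅l.get p, l.get q⁆ = 0) :
    leftNestList l = rightNestList l ∧
    leftNestList l = ((-1 : ℤ) ^ (l.length - 1)) • leftNestList l.reverse :=
  nested_bracket_symmetry_general l hcomm
end
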